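/- Fix real parameters γ, δ. Define the vector field F : ℝ³ → ℝ³ by F(x,y,z) = (2γy² − γδy + 2z² − γz/2, −2γxy + γδx, −4xz² + γxz), the vector field N(x,y,z) = (0, 2z² − γz/2, −γy + γδ/2), and the function G(x,y,z) = x² + y² + z. Then for every (x,y,z) ∈ ℝ³, F = N × ∇G (cross product), and consequently ∇G·F = 0 and N·F = 0 identically; in particular G is a conserved quantity of the bi-Hamiltonian system ẋ = F obtained from the reduced three-wave-interaction model. -/
import Mathlib


set_option linter.unusedVariables false

open Matrix

/-- Partial derivative with respect to the first variable. -/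
noncomputable def pd1 (f : ℝ → ℝ → ℝ → ℝ) (x y z : ℝ) : ℝ := deriv (fun t => f t y z) x
/-- Partial derivative with respect to the second variable. -/
noncomputable def pd2 (f : ℝ → ℝ → ℝ → ℝ) (x y z : ℝ) : ℝ := deriv (fun t => f x t z) y
/-- Partial derivative with respect to the third variable. -/
noncomputable def pd3 (f : ℝ → ℝ → ℝ → ℝ) (x y z : ℝ) : ℝ := deriv (fun t => f x y t) z

/-- The bi-Hamiltonian vector field obtained from the reduced
three-wave-interaction model. -/
noncomputable def F (γ δ : ℝ) (x y z : ℝ) : Fin 3 → ℝ :=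
  ![2 * γ * y ^ 2 - γ * δ * y + 2 * z ^ 2 - γ * z / 2,
    -2 * γ * x * y + γ * δ * x,
    -4 * x * z ^ 2 + γ * x * z]

/-- The higher-degree Poisson vector `N`. -/
noncomputable def Nv (γ δ : ℝ) (x y z : ℝ) : Fin 3 → ℝ :=
  ![0, 2 * z ^ 2 - γ * z / 2, -γ * y + γ * δ / 2]

/-- The Hamiltonian `G`. -/
noncomputable def G (x y z : ℝ) : ℝ := x ^ 2 + y ^ 2 + z

/-- Gradient of `G`. -/
noncomputable def gradG (x y z : ℝ) : Fin 3 → ℝ :=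
  ![pd1 G x y z, pd2 G x y z, pd3 G x y z]

/-- For all real `γ, δ`: `F = N × ∇G` everywhere, and consequently `∇G·F = 0` and
`N·F = 0` identically; in particular `G` is a conserved quantity of the
bi-Hamiltonian system `ẋ = F`. -/
theorem stmt_15 (γ δ : ℝ) :
    (∀ x y z : ℝ, F γ δ x y z = crossProduct (Nv γ δ x y z) (gradG x y z)) ∧
    (∀ x y z : ℝ, gradG x y z ⬝ᵥ F γ δ x y z = 0) ∧
    (∀ x y z : ℝ, Nv γ δ x y z ⬝ᵥ F γ δ x y z = 0) := by
  have hg : ∀ x y z : ℝ, gradG x y z = ![2 * x, 2 * y, 1] := by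
    intro x y z
    have h1 : pd1 G x y z = 2 * x := by
      simp only [pd1, G]
      rw [show (fun t : ℝ => t ^ 2 + y ^ 2 + z) = fun t : ℝ => t ^ 2 + (y ^ 2 + z) by
        funext t; ring]
      simp [deriv_add_const, deriv_pow]
    have h2 : pd2 G x y z = 2 * y := by
      simp only [pd2, G]
      rw [show (fun t : ℝ => x ^ 2 + t ^ 2 + z) = fun t : ℝ => t ^ 2 + (x ^ 2 + z) by
        funext t; ring]
      simp [deriv_add_const, deriv_pow]
    have h3 : pd3 G x y z = 1 := by
      simp only [pd3, G]
      have : (fun t : ℝ => x ^ 2 + y ^ 2 + t) = fun t : ℝ => (x ^ 2 + y ^ 2) + id t := by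
        funext t; simp
      rw [this, deriv_const_add, deriv_id]
    rw [gradG, h1, h2, h3]
  refine ⟨?_, ?_, ?_⟩ <;> intro x y z
  · funext i
    fin_cases i <;>
      simp [hg, F, Nv, crossProduct] <;> ring
  · simp only [hg, F, dotProduct, Fin.sum_univ_three, Matrix.cons_val_zero,
      Matrix.cons_val_one, Matrix.head_cons, Matrix.cons_val_two, Matrix.tail_cons]
    ring
  · simp only [hg, F, Nv, dotProduct, Fin.sum_univ_three, Matrix.cons_val_zero,
      Matrix.cons_val_one, Matrix.head_cons, Matrix.cons_val_two, Matrix.tail_cons]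
    ring
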